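/- Let ε > 0 be a constant, let q be a positive integer and let G ~ G(n,p) where p = (q+1+ε)·log n / n. Then asymptotically almost surely Σ_{v ∈ V(G)} (q/(q+1))^{d_G(v)} ≤ n^{−ε/(4(q+1))}. -/

import Mathlib

/-!
Put `x = q/(q+1)`. For each vertex `v`, `x ^ d(v)` is a product of independent factors, one per
potential edge at `v`, each of mean `1 - p (1 - x)`; hence
`E Σ_v x ^ d(v) = n (1 - p/(q+1)) ^ (n-1) ≤ n exp(-(1+c)(n-1) log n / n) ≤ n ^ (-3c/4)`
with `c = ε/(q+1)`, once `n` is large. Markov's inequality at the threshold `n ^ (-c/4)` bounds the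
failure probability by `n ^ (-c/2) → 0`.
-/

open MeasureTheory Filter

noncomputable def bernoulliMeasure (p : ℝ) : Measure Bool :=
  (PMF.bernoulli (min (Real.toNNReal p) 1) (min_le_right _ _)).toMeasure

noncomputable def gnp (n : ℕ) (p : ℝ) : Measure (Sym2 (Fin n) → Bool) :=
  Measure.pi fun _ => bernoulliMeasure p

def graphOf {n : ℕ} (ω : Sym2 (Fin n) → Bool) : SimpleGraph (Fin n) where
  Adj u v := u ≠ v ∧ ω s(u, v) = true
  symm := by
    refine ⟨?_⟩
    intro u v h
    exact ⟨h.1.symm, by rw [Sym2.eq_swap]; exact h.2⟩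
  loopless := by
    refine ⟨?_⟩
    intro u h
    exact h.1 rfl

instance {n : ℕ} (ω : Sym2 (Fin n) → Bool) : DecidableRel (graphOf ω).Adj :=
  fun u v => inferInstanceAs (Decidable (u ≠ v ∧ ω s(u, v) = true))

/-- `e_G(A)`: the number of edges with both endpoints in `A`. -/
def edgesWithin {n : ℕ} (ω : Sym2 (Fin n) → Bool) (A : Finset (Fin n)) : ℕ :=
  ((graphOf ω).edgeFinset ∩ A.sym2).card

/-- `e_G(X,Y)`: the number of edges with one endpoint in `X` and one in `Y`. -/
def edgesBetween {n : ℕ} (ω : Sym2 (Fin n) → Bool) (X Y : Finset (Fin n)) : ℕ :=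
  ((graphOf ω).edgeFinset.filter fun e => ∃ x ∈ X, ∃ y ∈ Y, e = s(x, y)).card

/-- `X_i`: the number of vertices of degree exactly `i`. -/
def degCount {n : ℕ} (ω : Sym2 (Fin n) → Bool) (i : ℕ) : ℕ :=
  (Finset.univ.filter fun v => (graphOf ω).degree v = i).card

/-- `μ_i = E[X_i]`. -/
noncomputable def muDeg (n : ℕ) (p : ℝ) (i : ℕ) : ℝ :=
  ∫ ω, (degCount ω i : ℝ) ∂(gnp n p)

/-- Outer neighbourhood of a vertex set. -/
def outerNbhd {V : Type*} (G : SimpleGraph V) (U : Set V) : Set V :=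
  {v | v ∉ U ∧ ∃ u ∈ U, G.Adj u v}

/-- `G` is a `(t,k)`-expander. -/
def IsExpander {V : Type*} (G : SimpleGraph V) (t k : ℝ) : Prop :=
  ∀ U : Set V, (U.ncard : ℝ) ≤ t → k * U.ncard ≤ ((outerNbhd G U).ncard : ℝ)

/-- Length of a longest path in `G`. -/
noncomputable def longestPathLength {V : Type*} (G : SimpleGraph V) : ℕ :=
  sSup {l : ℕ | ∃ (u v : V) (p : G.Walk u v), p.IsPath ∧ p.length = l}

/-- `e` is a booster for `G`. -/
def IsBooster {V : Type*} [Fintype V] [DecidableEq V] (G : SimpleGraph V) (e : Sym2 V) : Prop :=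
  ¬ e.IsDiag ∧ e ∉ G.edgeSet ∧
    ((G ⊔ SimpleGraph.fromEdgeSet {e}).IsHamiltonian ∨
      longestPathLength G < longestPathLength (G ⊔ SimpleGraph.fromEdgeSet {e}))

/-- The set of boosters of `G`. -/
def boosters {V : Type*} [Fintype V] [DecidableEq V] (G : SimpleGraph V) : Set (Sym2 V) :=
  {e | IsBooster G e}

instance (r : ℝ) : IsProbabilityMeasure (bernoulliMeasure r) :=
  PMF.toMeasure.isProbabilityMeasure _

instance (n : ℕ) (r : ℝ) : IsProbabilityMeasure (gnp n r) := by
  unfold gnp; infer_instance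

lemma integral_bernoulliMeasure_of_mem_Icc {r : ℝ} (hr : r ∈ Set.Icc 0 1) (f : Bool → ℝ) :
    ∫ b, f b ∂bernoulliMeasure r = r * f true + (1 - r) * f false := by
  have hmin : min r.toNNReal 1 = r.toNNReal := min_eq_left (by simpa using hr.2)
  rw [bernoulliMeasure, PMF.integral_eq_sum, Fintype.sum_bool]
  change ((min r.toNNReal 1 : NNReal) : ENNReal).toReal • f true
    + (1 - ((min r.toNNReal 1 : NNReal) : ENNReal)).toReal • f false = _
  rw [hmin, ENNReal.toReal_sub_of_le (by simpa using hr.2) ENNReal.one_ne_top]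
  simp [hr.1]

lemma incidenceFinset_graphOf {n : ℕ} (ω : Sym2 (Fin n) → Bool) (v : Fin n) :
    (graphOf ω).incidenceFinset v = {e ∈ (⊤ : SimpleGraph (Fin n)).incidenceFinset v | ω e} := by
  ext e
  induction e using Sym2.ind with
  | h a b =>
    simp only [SimpleGraph.mem_incidenceFinset, Finset.mem_filter]
    exact ⟨fun ⟨h, hv⟩ => ⟨⟨h.1, hv⟩, h.2⟩, fun ⟨⟨h, hv⟩, hω⟩ => ⟨⟨h, hω⟩, hv⟩⟩

lemma pow_degree_graphOf {n : ℕ} (x : ℝ) (ω : Sym2 (Fin n) → Bool) (v : Fin n) :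
    x ^ (graphOf ω).degree v =
      ∏ e, if e ∈ (⊤ : SimpleGraph (Fin n)).incidenceFinset v ∧ ω e then x else 1 := by
  rw [← SimpleGraph.card_incidenceFinset_eq_degree, incidenceFinset_graphOf, Finset.prod_ite,
    Finset.prod_const_one, mul_one, Finset.prod_const]
  congr 2
  ext e
  simp

lemma integral_pow_degree_graphOf {n : ℕ} {r : ℝ} (hr : r ∈ Set.Icc 0 1) (x : ℝ) (v : Fin n) :
    ∫ ω, x ^ (graphOf ω).degree v ∂gnp n r = (1 - r * (1 - x)) ^ (n - 1) := by
  set I := (⊤ : SimpleGraph (Fin n)).incidenceFinset v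
  simp_rw [gnp, pow_degree_graphOf]
  rw [integral_fintype_prod_eq_prod (fun e (b : Bool) => if e ∈ I ∧ b then x else 1)]
  calc ∏ e, ∫ b, (if e ∈ I ∧ b then x else 1) ∂bernoulliMeasure r
      = ∏ e, if e ∈ I then 1 - r * (1 - x) else 1 := by
        refine Finset.prod_congr rfl fun e _ => ?_
        rw [integral_bernoulliMeasure_of_mem_Icc hr]
        by_cases he : e ∈ I
        · simp [he]; ring
        · simp [he]
    _ = (1 - r * (1 - x)) ^ (n - 1) := by
        rw [Finset.prod_ite_mem, Finset.univ_inter, Finset.prod_const,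
          SimpleGraph.card_incidenceFinset_eq_degree]
        simp

lemma integral_sum_pow_degree_graphOf (n : ℕ) {r : ℝ} (hr : r ∈ Set.Icc 0 1) (x : ℝ) :
    ∫ ω, ∑ v : Fin n, x ^ (graphOf ω).degree v ∂gnp n r = n * (1 - r * (1 - x)) ^ (n - 1) := by
  simp [integral_finsetSum _ fun v _ => Integrable.of_finite, integral_pow_degree_graphOf hr]

lemma gnp_real_setOf_le_sum_pow_degree_le (n : ℕ) {r : ℝ} (hr : r ∈ Set.Icc 0 1) {x : ℝ} (hx : 0 ≤ x)
    {t : ℝ} (ht : 0 < t) :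
    (gnp n r).real {ω | t ≤ ∑ v : Fin n, x ^ (graphOf ω).degree v} ≤
      n * (1 - r * (1 - x)) ^ (n - 1) / t := by
  rw [le_div_iff₀ ht, mul_comm, ← integral_sum_pow_degree_graphOf n hr x]
  exact mul_meas_ge_le_integral_of_nonneg
    (.of_forall fun ω => Finset.sum_nonneg fun v _ => pow_nonneg hx _) .of_finite t

lemma natCast_mul_one_sub_pow_le_rpow {n : ℕ} {c : ℝ} (hc : 0 < c) (hn : 4 * (1 + c) / c ≤ n)
    (ha : (1 + c) * Real.log n / n ≤ 1) :
    n * (1 - (1 + c) * Real.log n / n) ^ (n - 1) ≤ (n : ℝ) ^ (-(3 * c / 4)) := by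
  have hn4 : (4 : ℝ) ≤ n := le_trans (by rw [le_div_iff₀ hc]; linarith) hn
  have hn0 : (0 : ℝ) < n := by linarith
  set L := Real.log n
  set a := (1 + c) * L / n
  have hL : 0 ≤ L := Real.log_natCast_nonneg n
  have hcast : ((n - 1 : ℕ) : ℝ) = n - 1 := by
    rw [Nat.cast_sub (by exact_mod_cast hn0), Nat.cast_one]
  have hpow : (1 - a) ^ (n - 1) ≤ Real.exp (-(a * (n - 1 : ℕ))) := calc
    (1 - a) ^ (n - 1) ≤ Real.exp (-a) ^ (n - 1) :=
      pow_le_pow_left₀ (by linarith) (Real.one_sub_le_exp_neg a) _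
    _ = Real.exp (-(a * (n - 1 : ℕ))) := by rw [← Real.exp_nat_mul]; ring_nf
  have hexp_le : L - a * ((n - 1 : ℕ) : ℝ) ≤ L * (-(3 * c / 4)) := by
    have hsmall : (1 + c) / n ≤ c / 4 := by
      rw [div_le_iff₀ hn0]; rw [div_le_iff₀ hc] at hn; linarith
    have hsplit : L - a * ((n - 1 : ℕ) : ℝ) = -c * L + (1 + c) / n * L := by
      rw [hcast]; simp only [a]; field_simp; ring
    rw [hsplit]; nlinarith
  calc (n : ℝ) * (1 - a) ^ (n - 1) ≤ Real.exp L * Real.exp (-(a * (n - 1 : ℕ))) := by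
        rw [Real.exp_log hn0]; gcongr
    _ ≤ Real.exp (L * (-(3 * c / 4))) := by
        rw [← Real.exp_add]; exact Real.exp_le_exp.2 (by linarith)
    _ = (n : ℝ) ^ (-(3 * c / 4)) := by rw [Real.rpow_def_of_pos hn0]

lemma gnp_setOf_lt_sum_pow_degree_le {n : ℕ} {r x c : ℝ} (hr : r ∈ Set.Icc 0 1) (hx : x ∈ Set.Icc 0 1)
    (hc : 0 < c) (hrx : r * (1 - x) = (1 + c) * Real.log n / n) (hn : 4 * (1 + c) / c ≤ n) :
    gnp n r {ω | (n : ℝ) ^ (-(c / 4)) < ∑ v : Fin n, x ^ (graphOf ω).degree v} ≤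
      ENNReal.ofReal ((n : ℝ) ^ (-(c / 2))) := by
  have hn0 : (0 : ℝ) < n := lt_of_lt_of_le (by positivity) hn
  have ha : (1 + c) * Real.log n / n ≤ 1 :=
    hrx ▸ mul_le_one₀ hr.2 (by linarith [hx.2]) (by linarith [hx.1])
  calc gnp n r {ω | (n : ℝ) ^ (-(c / 4)) < ∑ v : Fin n, x ^ (graphOf ω).degree v}
      ≤ gnp n r {ω | (n : ℝ) ^ (-(c / 4)) ≤ ∑ v : Fin n, x ^ (graphOf ω).degree v} :=
        measure_mono <| Set.ofPred_subset_ofPred.2 fun ω h => h.le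
    _ = ENNReal.ofReal
          ((gnp n r).real {ω | (n : ℝ) ^ (-(c / 4)) ≤ ∑ v : Fin n, x ^ (graphOf ω).degree v}) :=
        (ofReal_measureReal (measure_ne_top _ _)).symm
    _ ≤ ENNReal.ofReal ((n : ℝ) ^ (-(c / 2))) := by
        refine ENNReal.ofReal_le_ofReal ?_
        calc _ ≤ n * (1 - r * (1 - x)) ^ (n - 1) / (n : ℝ) ^ (-(c / 4)) :=
              gnp_real_setOf_le_sum_pow_degree_le n hr hx.1 (by positivity)
          _ ≤ (n : ℝ) ^ (-(3 * c / 4)) / (n : ℝ) ^ (-(c / 4)) := by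
              rw [hrx]; gcongr; exact natCast_mul_one_sub_pow_le_rpow hc hn ha
          _ = (n : ℝ) ^ (-(c / 2)) := by rw [← Real.rpow_sub hn0]; ring_nf

lemma tendsto_measure_of_tendsto_measure_compl {Ω : ℕ → Type*} [∀ n, MeasurableSpace (Ω n)]
    {μ : ∀ n, Measure (Ω n)} [∀ n, IsProbabilityMeasure (μ n)] {s : ∀ n, Set (Ω n)}
    (hs : ∀ n, MeasurableSet (s n)) (h : Tendsto (fun n => μ n (s n)ᶜ) atTop (nhds 0)) :
    Tendsto (fun n => μ n (s n)) atTop (nhds 1) := by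
  have := ENNReal.Tendsto.sub tendsto_const_nhds h (Or.inl ENNReal.one_ne_top)
  rw [tsub_zero] at this
  refine this.congr fun n => ?_
  rw [prob_compl_eq_one_sub (hs n), ENNReal.sub_sub_cancel ENNReal.one_ne_top prob_le_one]

theorem stmt_9_general (ε : ℝ) (hε : 0 < ε) (q : ℕ)
    (p : ℕ → ℝ) (hp : ∀ n : ℕ, p n = ((q : ℝ) + 1 + ε) * Real.log n / n) :
    Tendsto
      (fun n : ℕ => gnp n (p n)
        {ω | ∑ v : Fin n, ((q : ℝ) / ((q : ℝ) + 1)) ^ ((graphOf ω).degree v)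
            ≤ (n : ℝ) ^ (-(ε / (4 * ((q : ℝ) + 1))))})
      atTop (nhds 1) := by
  set c := ε / ((q : ℝ) + 1)
  have hc : 0 < c := by positivity
  have hx : (q : ℝ) / (q + 1) ∈ Set.Icc 0 1 :=
    ⟨by positivity, div_le_one_of_le₀ (by linarith) (by positivity)⟩
  have hpx : ∀ n : ℕ, p n * (1 - q / (q + 1)) = (1 + c) * Real.log n / n := fun n => by
    rw [hp n]; simp only [c]; field_simp; ring
  have hp_nonneg : ∀ n : ℕ, 0 ≤ p n := fun n => by
    rw [hp n]; have := Real.log_natCast_nonneg n; positivity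
  have hp_lim : Tendsto p atTop (nhds 0) := by
    have hlog : Tendsto (fun x : ℝ => Real.log x / x) atTop (nhds 0) := by
      simpa using Real.tendsto_pow_log_div_mul_add_atTop 1 0 1 one_ne_zero
    simpa [funext hp, mul_div_assoc] using
      (hlog.comp tendsto_natCast_atTop_atTop).const_mul ((q : ℝ) + 1 + ε)
  have hexponent : ε / (4 * ((q : ℝ) + 1)) = c / 4 := by rw [mul_comm, ← div_div]
  have hdecay : Tendsto (fun n : ℕ => ENNReal.ofReal ((n : ℝ) ^ (-(c / 2)))) atTop (nhds 0) := by
    rw [← ENNReal.ofReal_zero]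
    exact ENNReal.tendsto_ofReal
      ((tendsto_rpow_neg_atTop (by positivity)).comp tendsto_natCast_atTop_atTop)
  refine tendsto_measure_of_tendsto_measure_compl (fun _ => .of_discrete) <|
    tendsto_of_tendsto_of_tendsto_of_le_of_le' tendsto_const_nhds hdecay
      (.of_forall fun _ => zero_le) ?_
  filter_upwards [hp_lim.eventually_le_const one_pos,
    tendsto_natCast_atTop_atTop.eventually_ge_atTop (4 * (1 + c) / c)] with n hp_le hn
  simpa only [Set.compl_ofPred, not_le, hexponent] using
    gnp_setOf_lt_sum_pow_degree_le ⟨hp_nonneg n, hp_le⟩ hx hc (hpx n) hn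

/-- Lemma 4.10: for `p = (q+1+ε) log n / n`, a.a.s.
`Σ_v (q/(q+1))^{d_G(v)} ≤ n^{-ε/(4(q+1))}`. -/
theorem stmt_9 (ε : ℝ) (hε : 0 < ε) (q : ℕ) (hq : 1 ≤ q)
    (p : ℕ → ℝ) (hp : ∀ n : ℕ, p n = ((q : ℝ) + 1 + ε) * Real.log n / n) :
    Tendsto
      (fun n : ℕ => gnp n (p n)
        {ω | ∑ v : Fin n, ((q : ℝ) / ((q : ℝ) + 1)) ^ ((graphOf ω).degree v)
            ≤ (n : ℝ) ^ (-(ε / (4 * ((q : ℝ) + 1))))})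
      atTop (nhds 1) :=
  stmt_9_general ε hε q p hp
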